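/- Let p_0 = (B⁰, i⁰, j⁰) ∈ 𝕄, A = (A,I,J) ∈ 𝕄 and ℏ ∈ ℂ \ {0}. Then the point p_A(ℏ) ∈ 𝕄 satisfies, at every vertex k, the identity μ_ℂ(p_A(ℏ))_k = ℏ^{−1}·μ_ℂ(p_0 + A)_k + l_{p_0}^*(A)_k − 2i·μ_ℝ(p_0)_k − ℏ·(μ_ℂ(p_0)_k)†. -/
import Mathlib


open Matrix Filter Topology

namespace QuiverCL

noncomputable section

variable {n : ℕ} {E : Type*}

/-- Cast a matrix along equalities of vertices. -/
def castM2 (v : Fin n → ℕ) {a b a' b' : Fin n} (ea : a = a') (eb : b = b')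
    (M : Matrix (Fin (v a)) (Fin (v b)) ℂ) : Matrix (Fin (v a')) (Fin (v b')) ℂ :=
  Matrix.reindex (finCongr (congrArg v ea)) (finCongr (congrArg v eb)) M

/-- The quiver representation space `𝕄`: a triple `(B, i, j)` of families of matrices,
`B h : V (src h) → V (tgt h)`, `i k : W k → V k`, `j k : V k → W k`
(matrices act on column vectors, so `Hom(V_a, V_b)` is `Matrix (Fin (v b)) (Fin (v a)) ℂ`). -/
abbrev Rep (src tgt : E → Fin n) (v w : Fin n → ℕ) : Type _ :=
  (∀ h : E, Matrix (Fin (v (tgt h))) (Fin (v (src h))) ℂ)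
  × (∀ k : Fin n, Matrix (Fin (v k)) (Fin (w k)) ℂ)
  × (∀ k : Fin n, Matrix (Fin (w k)) (Fin (v k)) ℂ)

/-- `ε(h) = 1` for `h ∈ Ω` and `ε(h) = -1` for `h ∈ Ω̄`. -/
def eps (Ω : E → Prop) [DecidablePred Ω] (h : E) : ℂ := if Ω h then 1 else -1

/-- The matrix `B_{h̄}` attached to the reversed edge, recast so that it is a matrix
`V (tgt h) → V (src h)`. -/
def Bbar (src tgt : E → Fin n) (bar : E → E) (v w : Fin n → ℕ)
    (hbs : ∀ h, src (bar h) = tgt h) (hbt : ∀ h, tgt (bar h) = src h)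
    (p : Rep src tgt v w) (h : E) : Matrix (Fin (v (src h))) (Fin (v (tgt h))) ℂ :=
  castM2 v (hbt h) (hbs h) (p.1 (bar h))

/-- The real moment map, componentwise:
`μ_ℝ(B,i,j)_k = (i/2)·[Σ_{in(h)=k} (B_h B_h† − B_{h̄}† B_{h̄}) + i_k i_k† − j_k† j_k]`. -/
def muR [Fintype E] (src tgt : E → Fin n) (bar : E → E) (v w : Fin n → ℕ)
    (hbs : ∀ h, src (bar h) = tgt h) (hbt : ∀ h, tgt (bar h) = src h)
    (p : Rep src tgt v w) (k : Fin n) : Matrix (Fin (v k)) (Fin (v k)) ℂ :=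
  (Complex.I / 2) •
    ((∑ h : E, if e : tgt h = k then
        castM2 v e e
          (p.1 h * (p.1 h)ᴴ -
            (Bbar src tgt bar v w hbs hbt p h)ᴴ * Bbar src tgt bar v w hbs hbt p h)
      else 0)
      + (p.2.1 k * (p.2.1 k)ᴴ - (p.2.2 k)ᴴ * p.2.2 k))

/-- The complex moment map, componentwise:
`μ_ℂ(B,i,j)_k = Σ_{in(h)=k} ε(h)·B_h B_{h̄} + i_k j_k`. -/
def muC [Fintype E] (src tgt : E → Fin n) (bar : E → E) (Ω : E → Prop) [DecidablePred Ω]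
    (v w : Fin n → ℕ)
    (hbs : ∀ h, src (bar h) = tgt h) (hbt : ∀ h, tgt (bar h) = src h)
    (p : Rep src tgt v w) (k : Fin n) : Matrix (Fin (v k)) (Fin (v k)) ℂ :=
  (∑ h : E, if e : tgt h = k then
      eps Ω h • castM2 v e e (p.1 h * Bbar src tgt bar v w hbs hbt p h)
    else 0)
    + p.2.1 k * p.2.2 k

/-- The hyperkähler rotation `HK_ξ(B,i,j) = (B_h − ε(h)·ξ·B_{h̄}†, i_k − ξ·j_k†, j_k + ξ·i_k†)`. -/
def HK (src tgt : E → Fin n) (bar : E → E) (Ω : E → Prop) [DecidablePred Ω]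
    (v w : Fin n → ℕ)
    (hbs : ∀ h, src (bar h) = tgt h) (hbt : ∀ h, tgt (bar h) = src h)
    (ξ : ℂ) (p : Rep src tgt v w) : Rep src tgt v w :=
  ⟨fun h => p.1 h - (eps Ω h * ξ) • (Bbar src tgt bar v w hbs hbt p h)ᴴ,
   fun k => p.2.1 k - ξ • (p.2.2 k)ᴴ,
   fun k => p.2.2 k + ξ • (p.2.1 k)ᴴ⟩

/-- The gauge action `g·(B,i,j) = (g_{in(h)} B_h g_{out(h)}⁻¹, g_k i_k, j_k g_k⁻¹)`. -/
def gauge (src tgt : E → Fin n) (v w : Fin n → ℕ)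
    (g : ∀ k : Fin n, Matrix (Fin (v k)) (Fin (v k)) ℂ) (p : Rep src tgt v w) :
    Rep src tgt v w :=
  ⟨fun h => g (tgt h) * p.1 h * (g (src h))⁻¹,
   fun k => g k * p.2.1 k,
   fun k => p.2.2 k * (g k)⁻¹⟩

/-- The infinitesimal gauge action `l_p(ξ) = (ξ_{in(h)} B_h − B_h ξ_{out(h)}, ξ_k i_k, −j_k ξ_k)`. -/
def lp (src tgt : E → Fin n) (v w : Fin n → ℕ)
    (p : Rep src tgt v w) (ξ : ∀ k : Fin n, Matrix (Fin (v k)) (Fin (v k)) ℂ) :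
    Rep src tgt v w :=
  ⟨fun h => ξ (tgt h) * p.1 h - p.1 h * ξ (src h),
   fun k => ξ k * p.2.1 k,
   fun k => -(p.2.2 k * ξ k)⟩

/-- The adjoint of the infinitesimal gauge action, componentwise:
`l_p^*(q)_k = Σ_{in(h)=k} (A_h B_h† − B_{h̄}† A_{h̄}) + I_k i_k† − j_k† J_k`. -/
def lpStar [Fintype E] (src tgt : E → Fin n) (bar : E → E) (v w : Fin n → ℕ)
    (hbs : ∀ h, src (bar h) = tgt h) (hbt : ∀ h, tgt (bar h) = src h)
    (p q : Rep src tgt v w) (k : Fin n) : Matrix (Fin (v k)) (Fin (v k)) ℂ :=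
  (∑ h : E, if e : tgt h = k then
      castM2 v e e
        (q.1 h * (p.1 h)ᴴ -
          (Bbar src tgt bar v w hbs hbt p h)ᴴ * Bbar src tgt bar v w hbs hbt q h)
    else 0)
    + (q.2.1 k * (p.2.1 k)ᴴ - (p.2.2 k)ᴴ * q.2.2 k)

/-- The hermitian inner product
`⟨q, q′⟩ = Σ_h Tr(A_h A′_h†) + Σ_k Tr(I_k I′_k†) + Σ_k Tr(J_k J′_k†)` on `𝕄`. -/
def innerRep [Fintype E] (src tgt : E → Fin n) (v w : Fin n → ℕ)
    (q q' : Rep src tgt v w) : ℂ :=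
  (∑ h : E, (q.1 h * (q'.1 h)ᴴ).trace)
    + (∑ k : Fin n, (q.2.1 k * (q'.2.1 k)ᴴ).trace)
    + (∑ k : Fin n, (q.2.2 k * (q'.2.2 k)ᴴ).trace)

/-- The complex symplectic form
`ω_ℂ(q, q′) = Σ_h ε(h)·Tr(A_h A′_{h̄}) + Σ_k Tr(I_k J′_k − I′_k J_k)`. -/
def omegaC [Fintype E] (src tgt : E → Fin n) (bar : E → E) (Ω : E → Prop) [DecidablePred Ω]
    (v w : Fin n → ℕ)
    (hbs : ∀ h, src (bar h) = tgt h) (hbt : ∀ h, tgt (bar h) = src h)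
    (q q' : Rep src tgt v w) : ℂ :=
  (∑ h : E, eps Ω h * (q.1 h * Bbar src tgt bar v w hbs hbt q' h).trace)
    + ∑ k : Fin n, ((q.2.1 k * q'.2.2 k).trace - (q'.2.1 k * q.2.2 k).trace)

/-- The scaling action `t∘(B,i,j)`: multiply the `Ω̄`-components and the `j`-components by `t`. -/
def scale (src tgt : E → Fin n) (Ω : E → Prop) [DecidablePred Ω] (v w : Fin n → ℕ)
    (t : ℂ) (p : Rep src tgt v w) : Rep src tgt v w :=
  ⟨fun h => if Ω h then p.1 h else t • p.1 h,
   fun k => p.2.1 k,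
   fun k => t • p.2.2 k⟩

/-- The second complex structure `J(m, m′) = (−(m′)†, m†)` on `𝕄 = 𝕄_Ω ⊕ 𝕄_Ω̄`. -/
def Jmap (src tgt : E → Fin n) (bar : E → E) (Ω : E → Prop) [DecidablePred Ω]
    (v w : Fin n → ℕ)
    (hbs : ∀ h, src (bar h) = tgt h) (hbt : ∀ h, tgt (bar h) = src h)
    (q : Rep src tgt v w) : Rep src tgt v w :=
  ⟨fun h => (-(eps Ω h)) • (Bbar src tgt bar v w hbs hbt q h)ᴴ,
   fun k => -((q.2.2 k)ᴴ),
   fun k => (q.2.1 k)ᴴ⟩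

/-- The point `p_A(ℏ)` of `𝕄`: for `h ∈ Ω` the `h`-component is `B⁰_h + A_h − ℏ·(B⁰_{h̄})†` and
for `h ∈ Ω̄` it is `ℏ⁻¹·(B⁰_h + A_h) + (B⁰_{h̄})†`; the `i`-components are
`i⁰_k + I_k − ℏ·(j⁰_k)†` and the `j`-components are `ℏ⁻¹·(j⁰_k + J_k) + (i⁰_k)†`. -/
def pA (src tgt : E → Fin n) (bar : E → E) (Ω : E → Prop) [DecidablePred Ω]
    (v w : Fin n → ℕ)
    (hbs : ∀ h, src (bar h) = tgt h) (hbt : ∀ h, tgt (bar h) = src h)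
    (p0 A : Rep src tgt v w) (ℏ : ℂ) : Rep src tgt v w :=
  ⟨fun h => if Ω h
      then p0.1 h + A.1 h - ℏ • (Bbar src tgt bar v w hbs hbt p0 h)ᴴ
      else ℏ⁻¹ • (p0.1 h + A.1 h) + (Bbar src tgt bar v w hbs hbt p0 h)ᴴ,
   fun k => p0.2.1 k + A.2.1 k - ℏ • (p0.2.2 k)ᴴ,
   fun k => ℏ⁻¹ • (p0.2.2 k + A.2.2 k) + (p0.2.1 k)ᴴ⟩

/-- The linearization of the real moment map equation:
`ℒ(p,ξ)_k = Σ_{in(h)=k} [B_h(B_h† ξ_{in(h)} − ξ_{out(h)} B_h†) −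
(B_{h̄}† ξ_{out(h)} − ξ_{in(h)} B_{h̄}†) B_{h̄}] + i_k i_k† ξ_k + ξ_k j_k† j_k`. -/
def linL [Fintype E] (src tgt : E → Fin n) (bar : E → E) (v w : Fin n → ℕ)
    (hbs : ∀ h, src (bar h) = tgt h) (hbt : ∀ h, tgt (bar h) = src h)
    (p : Rep src tgt v w) (ξ : ∀ k : Fin n, Matrix (Fin (v k)) (Fin (v k)) ℂ)
    (k : Fin n) : Matrix (Fin (v k)) (Fin (v k)) ℂ :=
  (∑ h : E, if e : tgt h = k then
      castM2 v e e
        (p.1 h * ((p.1 h)ᴴ * ξ (tgt h) - ξ (src h) * (p.1 h)ᴴ)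
          - ((Bbar src tgt bar v w hbs hbt p h)ᴴ * ξ (src h)
              - ξ (tgt h) * (Bbar src tgt bar v w hbs hbt p h)ᴴ)
            * Bbar src tgt bar v w hbs hbt p h)
    else 0)
    + (p.2.1 k * (p.2.1 k)ᴴ * ξ k + ξ k * (p.2.2 k)ᴴ * p.2.2 k)

/-- The product of the matrices of `p` along a list of edges `[h_1, …, h_m]`, as a matrix
`V_a → V_b`; when the list is a path with `a = out(h_1)` and `b = in(h_m)` this is the genuine
composite `B_{h_m} ⋯ B_{h_1}`. -/
def prodAlong (src tgt : E → Fin n) (v w : Fin n → ℕ) (p : Rep src tgt v w) :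
    List E → (a : Fin n) → (b : Fin n) → Matrix (Fin (v b)) (Fin (v a)) ℂ
  | [], a, b => if e : a = b then castM2 v e rfl (1 : Matrix (Fin (v a)) (Fin (v a)) ℂ) else 0
  | (h : E) :: rest, a, b =>
      prodAlong src tgt v w p rest (tgt h) b *
        (if e : src h = a then castM2 v rfl e (p.1 h) else 0)

section Aux

variable (v : Fin n → ℕ)

lemma castM2_rfl {a b : Fin n} (M : Matrix (Fin (v a)) (Fin (v b)) ℂ) :
    castM2 v rfl rfl M = M := by
  simp [castM2]

lemma castM2_id {a b : Fin n} (ea : a = a) (eb : b = b)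
    (M : Matrix (Fin (v a)) (Fin (v b)) ℂ) :
    castM2 v ea eb M = M := by
  rw [Subsingleton.elim ea rfl, Subsingleton.elim eb rfl, castM2_rfl]

lemma castM2_trans {a b a' b' a'' b'' : Fin n} (ea : a = a') (eb : b = b')
    (ea' : a' = a'') (eb' : b' = b'')
    (M : Matrix (Fin (v a)) (Fin (v b)) ℂ) :
    castM2 v ea' eb' (castM2 v ea eb M) = castM2 v (ea.trans ea') (eb.trans eb') M := by
  subst ea; subst eb; subst ea'; subst eb'
  simp only [castM2_id]

lemma castM2_add {a b a' b' : Fin n} (ea : a = a') (eb : b = b')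
    (M N : Matrix (Fin (v a)) (Fin (v b)) ℂ) :
    castM2 v ea eb (M + N) = castM2 v ea eb M + castM2 v ea eb N := by
  subst ea; subst eb; rw [castM2_rfl, castM2_rfl, castM2_rfl]

lemma castM2_smul {a b a' b' : Fin n} (ea : a = a') (eb : b = b') (c : ℂ)
    (M : Matrix (Fin (v a)) (Fin (v b)) ℂ) :
    castM2 v ea eb (c • M) = c • castM2 v ea eb M := by
  subst ea; subst eb; rw [castM2_rfl, castM2_rfl]

lemma castM2_conjTranspose {a b a' b' : Fin n} (ea : a = a') (eb : b = b')
    (M : Matrix (Fin (v a)) (Fin (v b)) ℂ) :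
    castM2 v eb ea Mᴴ = (castM2 v ea eb M)ᴴ := by
  subst ea; subst eb; rw [castM2_rfl, castM2_rfl]

lemma fst_eq_of_eq (src tgt : E → Fin n) (w : Fin n → ℕ) (p : Rep src tgt v w)
    {h h' : E} (e : h' = h) :
    p.1 h' = castM2 v (congrArg tgt e).symm (congrArg src e).symm (p.1 h) := by
  subst e; rw [castM2_id]

lemma Bbar_add (src tgt : E → Fin n) (bar : E → E) (w : Fin n → ℕ)
    (hbs : ∀ h, src (bar h) = tgt h) (hbt : ∀ h, tgt (bar h) = src h)
    (p q : Rep src tgt v w) (h : E) :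
    Bbar src tgt bar v w hbs hbt (p + q) h
      = Bbar src tgt bar v w hbs hbt p h + Bbar src tgt bar v w hbs hbt q h := by
  unfold Bbar
  rw [show (p + q).1 (bar h) = p.1 (bar h) + q.1 (bar h) from rfl, castM2_add]

lemma Bbar_bar_ct (src tgt : E → Fin n) (bar : E → E) (w : Fin n → ℕ)
    (hinv : ∀ h, bar (bar h) = h)
    (hbs : ∀ h, src (bar h) = tgt h) (hbt : ∀ h, tgt (bar h) = src h)
    (p : Rep src tgt v w) (h : E) :
    castM2 v (hbt h) (hbs h) ((Bbar src tgt bar v w hbs hbt p (bar h))ᴴ)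
      = (p.1 h)ᴴ := by
  unfold Bbar
  rw [fst_eq_of_eq v src tgt w p (hinv h), castM2_trans,
    ← castM2_conjTranspose, castM2_trans, castM2_id]

lemma Bbar_pA_pos (src tgt : E → Fin n) (bar : E → E) (Ω : E → Prop) [DecidablePred Ω]
    (w : Fin n → ℕ)
    (hinv : ∀ h, bar (bar h) = h)
    (hbs : ∀ h, src (bar h) = tgt h) (hbt : ∀ h, tgt (bar h) = src h)
    (hor : ∀ h, Ω (bar h) ↔ ¬ Ω h)
    (p0 A : Rep src tgt v w) (ℏ : ℂ) (h : E) (hΩ : Ω h) :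
    Bbar src tgt bar v w hbs hbt (pA src tgt bar Ω v w hbs hbt p0 A ℏ) h
      = ℏ⁻¹ • (Bbar src tgt bar v w hbs hbt p0 h + Bbar src tgt bar v w hbs hbt A h)
        + (p0.1 h)ᴴ := by
  have hnot : ¬ Ω (bar h) := by simp [hor h, hΩ]
  conv_lhs => rw [Bbar]
  rw [show (pA src tgt bar Ω v w hbs hbt p0 A ℏ).1 (bar h)
      = ℏ⁻¹ • (p0.1 (bar h) + A.1 (bar h))
        + (Bbar src tgt bar v w hbs hbt p0 (bar h))ᴴ from by
    simp [pA, hnot]]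
  rw [castM2_add, castM2_smul, castM2_add, Bbar_bar_ct v src tgt bar w hinv hbs hbt p0 h]
  rfl

lemma Bbar_pA_neg (src tgt : E → Fin n) (bar : E → E) (Ω : E → Prop) [DecidablePred Ω]
    (w : Fin n → ℕ)
    (hinv : ∀ h, bar (bar h) = h)
    (hbs : ∀ h, src (bar h) = tgt h) (hbt : ∀ h, tgt (bar h) = src h)
    (hor : ∀ h, Ω (bar h) ↔ ¬ Ω h)
    (p0 A : Rep src tgt v w) (ℏ : ℂ) (h : E) (hΩ : ¬ Ω h) :
    Bbar src tgt bar v w hbs hbt (pA src tgt bar Ω v w hbs hbt p0 A ℏ) h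
      = (Bbar src tgt bar v w hbs hbt p0 h + Bbar src tgt bar v w hbs hbt A h)
        - ℏ • (p0.1 h)ᴴ := by
  have hyes : Ω (bar h) := by simp [hor h, hΩ]
  conv_lhs => rw [Bbar]
  rw [show (pA src tgt bar Ω v w hbs hbt p0 A ℏ).1 (bar h)
      = (p0.1 (bar h) + A.1 (bar h))
        - ℏ • (Bbar src tgt bar v w hbs hbt p0 (bar h))ᴴ from by
    simp [pA, hyes, add_sub_assoc]]
  rw [show ∀ (X Y : Matrix (Fin (v (tgt (bar h)))) (Fin (v (src (bar h)))) ℂ),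
      X - ℏ • Y = X + (-ℏ) • Y from fun X Y => by rw [neg_smul, sub_eq_add_neg]]
  rw [castM2_add, castM2_add, castM2_smul, Bbar_bar_ct v src tgt bar w hinv hbs hbt p0 h]
  rw [neg_smul, ← sub_eq_add_neg]
  rfl

lemma key1 {m s : Type*} [Fintype s] (ℏ : ℂ) (hh : ℏ ≠ 0)
    (b a : Matrix m s ℂ) (b' a' : Matrix s m ℂ) :
    (b + a - ℏ • b'ᴴ) * (ℏ⁻¹ • (b' + a') + bᴴ)
      = ℏ⁻¹ • ((b + a) * (b' + a')) + (a * bᴴ - b'ᴴ * a')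
        + ((b * bᴴ - b'ᴴ * b') - ℏ • (b * b')ᴴ) := by
  have h1 : ℏ * ℏ⁻¹ = 1 := mul_inv_cancel₀ hh
  have h2 : ℏ⁻¹ * ℏ = 1 := inv_mul_cancel₀ hh
  simp only [Matrix.sub_mul, Matrix.add_mul, Matrix.mul_add, Matrix.mul_sub,
    Matrix.smul_mul, Matrix.mul_smul, smul_smul, h1, h2, one_smul,
    Matrix.conjTranspose_mul, smul_add, smul_sub]
  abel

lemma key2 {m s : Type*} [Fintype s] (ℏ : ℂ) (hh : ℏ ≠ 0)
    (b a : Matrix m s ℂ) (b' a' : Matrix s m ℂ) :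
    (-1 : ℂ) • ((ℏ⁻¹ • (b + a) + b'ᴴ) * ((b' + a') - ℏ • bᴴ))
      = ℏ⁻¹ • ((-1 : ℂ) • ((b + a) * (b' + a'))) + (a * bᴴ - b'ᴴ * a')
        + ((b * bᴴ - b'ᴴ * b') - ℏ • ((-1 : ℂ) • (b * b'))ᴴ) := by
  have h1 : ℏ * ℏ⁻¹ = 1 := mul_inv_cancel₀ hh
  have h2 : ℏ⁻¹ * ℏ = 1 := inv_mul_cancel₀ hh
  simp only [Matrix.sub_mul, Matrix.add_mul, Matrix.mul_add, Matrix.mul_sub,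
    Matrix.smul_mul, Matrix.mul_smul, smul_smul, h1, h2, one_smul,
    Matrix.conjTranspose_mul, Matrix.conjTranspose_smul, smul_add, smul_sub,
    neg_smul, smul_neg, star_neg, star_one, neg_neg, neg_sub, neg_add, one_smul,
    mul_one, mul_neg, neg_mul, one_mul, neg_one_smul, Matrix.conjTranspose_neg]
  abel

lemma conjTranspose_sum' {ι α β : Type*} (s : Finset ι) (f : ι → Matrix α β ℂ) :
    (∑ i ∈ s, f i)ᴴ = ∑ i ∈ s, (f i)ᴴ :=
  Matrix.conjTranspose_sum s f

lemma assemble {ι M : Type*} [Fintype ι] [AddCommGroup M] [Module ℂ M]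
    (ℏ : ℂ) (f1 f2 f3 f4 : ι → M) (c1 c2 c3 c4 : M) :
    (∑ h : ι, (ℏ⁻¹ • f1 h + f2 h + (f3 h - ℏ • f4 h)))
        + (ℏ⁻¹ • c1 + c2 + (c3 - ℏ • c4))
      = ℏ⁻¹ • ((∑ h : ι, f1 h) + c1) + ((∑ h : ι, f2 h) + c2)
        - (2 * Complex.I) • ((Complex.I / 2) • ((∑ h : ι, f3 h) + c3))
        - ℏ • ((∑ h : ι, f4 h) + c4) := by
  have hI : (2 * Complex.I) * (Complex.I / 2) = -1 := by linear_combination Complex.I_mul_I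
  rw [smul_smul, hI, neg_smul, one_smul, sub_neg_eq_add]
  simp only [smul_add, Finset.smul_sum, Finset.sum_add_distrib, Finset.sum_sub_distrib]
  abel

end Aux

set_option maxHeartbeats 1000000 in
/-- `μ_ℂ(p_A(ℏ))_k = ℏ⁻¹·μ_ℂ(p_0+A)_k + l_{p_0}^*(A)_k − 2i·μ_ℝ(p_0)_k
− ℏ·(μ_ℂ(p_0)_k)†`. -/
theorem muC_pA {n : ℕ} {E : Type*} [Fintype E]
    (src tgt : E → Fin n) (bar : E → E) (Ω : E → Prop) [DecidablePred Ω]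
    (v w : Fin n → ℕ)
    (hloop : ∀ h, src h ≠ tgt h)
    (hinv : ∀ h, bar (bar h) = h) (hfree : ∀ h, bar h ≠ h)
    (hbs : ∀ h, src (bar h) = tgt h) (hbt : ∀ h, tgt (bar h) = src h)
    (hor : ∀ h, Ω (bar h) ↔ ¬ Ω h)
    (p0 A : Rep src tgt v w) (ℏ : ℂ) (hh : ℏ ≠ 0) (k : Fin n) :
    muC src tgt bar Ω v w hbs hbt (pA src tgt bar Ω v w hbs hbt p0 A ℏ) k
      = ℏ⁻¹ • muC src tgt bar Ω v w hbs hbt (p0 + A) k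
        + lpStar src tgt bar v w hbs hbt p0 A k
        - (2 * Complex.I) • muR src tgt bar v w hbs hbt p0 k
        - ℏ • (muC src tgt bar Ω v w hbs hbt p0 k)ᴴ := by
  classical
  have edge : ∀ h : E,
      (if e : tgt h = k then
        eps Ω h • castM2 v e e
          ((pA src tgt bar Ω v w hbs hbt p0 A ℏ).1 h *
            Bbar src tgt bar v w hbs hbt (pA src tgt bar Ω v w hbs hbt p0 A ℏ) h)
      else 0)
      = ℏ⁻¹ • (if e : tgt h = k then
            eps Ω h • castM2 v e e
              ((p0 + A).1 h * Bbar src tgt bar v w hbs hbt (p0 + A) h)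
          else 0)
        + (if e : tgt h = k then
            castM2 v e e
              (A.1 h * (p0.1 h)ᴴ -
                (Bbar src tgt bar v w hbs hbt p0 h)ᴴ * Bbar src tgt bar v w hbs hbt A h)
          else 0)
        + ((if e : tgt h = k then
            castM2 v e e
              (p0.1 h * (p0.1 h)ᴴ -
                (Bbar src tgt bar v w hbs hbt p0 h)ᴴ * Bbar src tgt bar v w hbs hbt p0 h)
          else 0)
        - ℏ • (if e : tgt h = k then
            eps Ω h • castM2 v e e (p0.1 h * Bbar src tgt bar v w hbs hbt p0 h)
          else 0)ᴴ) := by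
    intro h
    by_cases e : tgt h = k
    · rw [dif_pos e, dif_pos e, dif_pos e, dif_pos e, dif_pos e]
      subst e
      simp only [castM2_rfl]
      rw [show (p0 + A).1 h = p0.1 h + A.1 h from rfl,
        Bbar_add v src tgt bar w hbs hbt p0 A h]
      by_cases hΩ : Ω h
      · rw [Bbar_pA_pos v src tgt bar Ω w hinv hbs hbt hor p0 A ℏ h hΩ,
          show (pA src tgt bar Ω v w hbs hbt p0 A ℏ).1 h
            = p0.1 h + A.1 h - ℏ • (Bbar src tgt bar v w hbs hbt p0 h)ᴴ from by
              simp [pA, hΩ]]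
        simp only [eps, if_pos hΩ, one_smul]
        exact key1 ℏ hh (p0.1 h) (A.1 h) (Bbar src tgt bar v w hbs hbt p0 h) (Bbar src tgt bar v w hbs hbt A h)
      · rw [Bbar_pA_neg v src tgt bar Ω w hinv hbs hbt hor p0 A ℏ h hΩ,
          show (pA src tgt bar Ω v w hbs hbt p0 A ℏ).1 h
            = ℏ⁻¹ • (p0.1 h + A.1 h) + (Bbar src tgt bar v w hbs hbt p0 h)ᴴ from by
              simp [pA, hΩ]]
        simp only [eps, if_neg hΩ]
        exact key2 ℏ hh (p0.1 h) (A.1 h) (Bbar src tgt bar v w hbs hbt p0 h) (Bbar src tgt bar v w hbs hbt A h)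
    · rw [dif_neg e, dif_neg e, dif_neg e, dif_neg e, dif_neg e]
      simp
  have hscal : (2 * Complex.I) * (Complex.I / 2) = -1 := by
    linear_combination Complex.I_mul_I
  have hij : (pA src tgt bar Ω v w hbs hbt p0 A ℏ).2.1 k *
        (pA src tgt bar Ω v w hbs hbt p0 A ℏ).2.2 k
      = ℏ⁻¹ • ((p0 + A).2.1 k * (p0 + A).2.2 k)
        + (A.2.1 k * (p0.2.1 k)ᴴ - (p0.2.2 k)ᴴ * A.2.2 k)
        + ((p0.2.1 k * (p0.2.1 k)ᴴ - (p0.2.2 k)ᴴ * p0.2.2 k)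
          - ℏ • (p0.2.1 k * p0.2.2 k)ᴴ) :=
    key1 ℏ hh (p0.2.1 k) (A.2.1 k) (p0.2.2 k) (A.2.2 k)
  simp only [muC, muR, lpStar]
  rw [Finset.sum_congr rfl fun h _ => edge h, hij, Matrix.conjTranspose_add,
    conjTranspose_sum']
  exact assemble ℏ _ _ _ _ _ _ _ _

end

end QuiverCL
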